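/- arXiv:1406.0762 — 3 statements merged into one kernel-verified Lean document; each statement's English description precedes it below -/
import Mathlib

section
/- For the product Laguerre weight, ⟨Q_i^n, Q_l^m⟩_∇ = 0 whenever |n - m| ≥ 2, for all 0 ≤ i ≤ n and 0 ≤ l ≤ m. -/
/-!
Each `Q_i^n` and each of its partial derivatives is a product of one-variable polynomials, so
`⟨Q_i^n, Q_l^m⟩_∇` is a sum of two products of one-variable Laguerre integrals.
Once the Gamma ratios in the Laguerre coefficients are written as Pochhammer symbols, `q_n(w_α)`
is the monic Laguerre polynomial of parameter `α - 1`, and `q_n' = n p_{n-1}(w_α)`. In the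
`x`-part the derivatives pair `p_{n-i-1}` with `p_{m-l-1}`, which are orthogonal unless
`n - i = m - l`; but then `|i - l| ≥ 2`, and `q_i ⊥ q_l` because `q_l = p_l + l p_{l-1}` while
`deg q_i < l - 1`. The `y`-part is symmetric. Orthogonality of the `p_n` reduces, via
`∫ x^k w_α = Γ(α+k+1)`, to the vanishing of the `n`-th forward difference of a polynomial of
degree `< n`.
-/

open Finset MeasureTheory

/-- The classical Laguerre polynomial. -/
noncomputable def laguerre (α : ℝ) (n : ℕ) (x : ℝ) : ℝ :=
  ∑ k ∈ Finset.range (n + 1),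
    (-1) ^ k * (Real.Gamma ((n : ℝ) + α + 1) /
      (Real.Gamma ((k : ℝ) + α + 1) * (n - k).factorial)) * x ^ k / k.factorial

/-- The monic Laguerre polynomial `p_n(w_α;x) = (-1)^n n! L_n^α(x)`. -/
noncomputable def lagMonic (α : ℝ) (n : ℕ) (x : ℝ) : ℝ :=
  (-1) ^ n * n.factorial * laguerre α n x

/-- `q_n(w_α;x) = p_n(w_α;x) + n·p_{n-1}(w_α;x)`. -/
noncomputable def lagQ (α : ℝ) (n : ℕ) (x : ℝ) : ℝ :=
  lagMonic α n x + n * lagMonic α (n - 1) x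

/-- The normalized gradient bilinear form for the product Laguerre weight
`W_{α,β}(x,y) = x^α e^{-x} y^β e^{-y}` on `[0,∞)²`. -/
noncomputable def lagGrad (α β : ℝ) (f g : ℝ → ℝ → ℝ) : ℝ :=
  (1 / (Real.Gamma (α + 1) * Real.Gamma (β + 1))) *
    ∫ p in (Set.Ioi (0 : ℝ)) ×ˢ (Set.Ioi (0 : ℝ)),
      (deriv (fun t => f t p.2) p.1 * deriv (fun t => g t p.2) p.1 +
        deriv (fun t => f p.1 t) p.2 * deriv (fun t => g p.1 t) p.2) *
      (Real.rpow p.1 α * Real.exp (-p.1) * (Real.rpow p.2 β * Real.exp (-p.2)))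

/-- Evaluation of a bivariate polynomial as a function of two real variables. -/
noncomputable def pev (P : MvPolynomial (Fin 2) ℝ) (x y : ℝ) : ℝ :=
  MvPolynomial.eval ![x, y] P

/-- The product monic Laguerre polynomials `P_k^n(x,y) = p_{n-k}(w_α;x) p_k(w_β;y)`. -/
noncomputable def lagP (α β : ℝ) (n k : ℕ) (x y : ℝ) : ℝ :=
  lagMonic α (n - k) x * lagMonic β k y

/-- The polynomials `Q_k^n(x,y) = q_{n-k}(w_α;x) q_k(w_β;y)`. -/
noncomputable def lagQ2 (α β : ℝ) (n k : ℕ) (x y : ℝ) : ℝ :=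
  lagQ α (n - k) x * lagQ β k y

/-- `h_k^m = (m-k)!·k!·(α+1)_{m-k}·(β+1)_k`. -/
noncomputable def hkn (α β : ℝ) (k m : ℕ) : ℝ :=
  ((m - k).factorial : ℝ) * k.factorial *
    (ascPochhammer ℝ (m - k)).eval (α + 1) * (ascPochhammer ℝ k).eval (β + 1)

open Polynomial

theorem Real.Gamma_add_nat_eq_mul_ascPochhammer {y : ℝ} (hy : 0 < y) (j : ℕ) :
    Real.Gamma (y + j) = Real.Gamma y * (ascPochhammer ℝ j).eval y := by
  induction j with
  | zero => simp
  | succ j ih =>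
    rw [Nat.cast_succ, ← add_assoc, Real.Gamma_add_one (by positivity), ih,
      ascPochhammer_succ_eval]
    ring

/-- `p_n(w_a)`, with the ratios `Γ(n+a+1)/Γ(k+a+1)` of `lagMonic` written as Pochhammer symbols
`(a+k+1)_{n-k}`, so that it makes sense for every `a` (it is needed at `a = α - 1`). -/
noncomputable def monicLaguerre (a : ℝ) (n : ℕ) : ℝ[X] :=
  ∑ k ∈ range (n + 1),
    C ((-1) ^ (n - k) * n.choose k * (ascPochhammer ℝ (n - k)).eval (a + k + 1)) * X ^ k

theorem coeff_monicLaguerre (a : ℝ) (n k : ℕ) :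
    (monicLaguerre a n).coeff k =
      (-1) ^ (n - k) * n.choose k * (ascPochhammer ℝ (n - k)).eval (a + k + 1) := by
  simp only [monicLaguerre, finsetSum_coeff, coeff_C_mul_X_pow, sum_ite_eq, mem_range]
  split_ifs with hk
  · rfl
  · rw [Nat.choose_eq_zero_of_lt (by omega), Nat.cast_zero, mul_zero, zero_mul]

theorem natDegree_monicLaguerre_le (a : ℝ) (n : ℕ) : (monicLaguerre a n).natDegree ≤ n :=
  natDegree_le_iff_coeff_eq_zero.mpr fun k hk => by
    rw [coeff_monicLaguerre, Nat.choose_eq_zero_of_lt hk, Nat.cast_zero, mul_zero, zero_mul]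

theorem derivative_monicLaguerre (a : ℝ) (n : ℕ) :
    derivative (monicLaguerre a n) = n * monicLaguerre (a + 1) (n - 1) := by
  ext k
  rw [coeff_derivative, coeff_natCast_mul, coeff_monicLaguerre, coeff_monicLaguerre]
  cases n with
  | zero => simp
  | succ n =>
    have hchoose : ((n + 1).choose (k + 1) : ℝ) * (k + 1) = (n + 1) * n.choose k := by
      exact_mod_cast (Nat.add_one_mul_choose_eq n k).symm
    rw [Nat.add_sub_add_right, Nat.add_sub_cancel, Nat.cast_succ k,
      show a + (k + 1) + 1 = a + k + 1 + 1 by ring, show a + 1 + k + 1 = a + k + 1 + 1 by ring]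
    push_cast
    linear_combination (-1) ^ (n - k) * (ascPochhammer ℝ (n - k)).eval (a + k + 1 + 1) * hchoose

/-- The shift identity `L_n^a = L_n^{a+1} - L_{n-1}^{a+1}` in monic normalization. -/
theorem monicLaguerre_eq_add (a : ℝ) (n : ℕ) :
    monicLaguerre a n = monicLaguerre (a + 1) n + n * monicLaguerre (a + 1) (n - 1) := by
  ext k
  rw [coeff_add, coeff_natCast_mul, coeff_monicLaguerre, coeff_monicLaguerre, coeff_monicLaguerre]
  rcases lt_or_ge n k with hnk | hkn
  · simp [Nat.choose_eq_zero_of_lt hnk, Nat.choose_eq_zero_of_lt (show n - 1 < k by omega)]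
  obtain ⟨j, rfl⟩ := Nat.exists_eq_add_of_le hkn
  cases j with
  | zero => cases k <;> simp
  | succ j =>
    have hchoose : ((k + j).choose k : ℝ) * (k + j + 1) = (k + j + 1).choose k * (j + 1) := by
      have := Nat.choose_mul_succ_eq (k + j) k
      rw [show k + j + 1 - k = j + 1 by omega] at this
      exact_mod_cast this
    have hpoch := congrArg (eval (a + k + 1)) (ascPochhammer_succ_comp_X_add_one ℝ j)
    simp only [nsmul_eq_mul, eval_add, eval_mul, eval_natCast, eval_comp, eval_X, eval_one] at hpoch
    rw [show k + (j + 1) - k = j + 1 by omega, show k + (j + 1) - 1 - k = j by omega,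
      show k + (j + 1) - 1 = k + j by omega]
    push_cast at hpoch ⊢
    rw [show a + 1 + k + 1 = a + k + 1 + 1 by ring]
    linear_combination -(-1) ^ j * (ascPochhammer ℝ j).eval (a + k + 1 + 1) * hchoose
      - (-1) ^ (j + 1) * ((k + j + 1).choose k : ℝ) * hpoch

theorem lagMonic_eq_eval {α : ℝ} (hα : -1 < α) (n : ℕ) (x : ℝ) :
    lagMonic α n x = (monicLaguerre α n).eval x := by
  rw [lagMonic, laguerre, monicLaguerre, eval_finsetSum, mul_sum]
  refine sum_congr rfl fun k hk => ?_
  obtain ⟨j, rfl⟩ := Nat.exists_eq_add_of_le (Nat.lt_succ_iff.mp (mem_range.mp hk))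
  have hpos : 0 < α + k + 1 := by linarith [(Nat.cast_nonneg k : (0 : ℝ) ≤ k)]
  have hGamma := Real.Gamma_add_nat_eq_mul_ascPochhammer hpos j
  have hfact : ((k + j).choose k : ℝ) * k.factorial * j.factorial = (k + j).factorial := by
    have := Nat.choose_mul_factorial_mul_factorial (Nat.le_add_right k j)
    rw [Nat.add_sub_cancel_left] at this
    exact_mod_cast this
  rw [show α + k + 1 + j = ((k + j : ℕ) : ℝ) + α + 1 by push_cast; ring,
    show α + k + 1 = (k : ℝ) + α + 1 by ring] at hGamma
  rw [Nat.add_sub_cancel_left, hGamma, pow_add, eval_mul, eval_C, eval_pow, eval_X, ← hfact,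
    show (k : ℝ) + α + 1 = α + k + 1 by ring]
  have : Real.Gamma (α + k + 1) ≠ 0 := (Real.Gamma_pos_of_pos hpos).ne'
  field_simp
  rw [← pow_mul, pow_mul', neg_one_sq, one_pow, one_mul]

theorem lagQ_eq_eval {α : ℝ} (hα : -1 < α) (n : ℕ) (x : ℝ) :
    lagQ α n x = (monicLaguerre (α - 1) n).eval x := by
  rw [lagQ, monicLaguerre_eq_add, sub_add_cancel, lagMonic_eq_eval hα, lagMonic_eq_eval hα,
    eval_add, eval_mul, eval_natCast]

/-- Integration against `x^α e^{-x}` on polynomials, defined algebraically by its moments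
(see `integral_eval_mul_lagWeight`). -/
noncomputable def lagMoment (α : ℝ) : ℝ[X] →ₗ[ℝ] ℝ :=
  lsum fun k => Real.Gamma (α + k + 1) • LinearMap.id

theorem lagMoment_monomial (α c : ℝ) (k : ℕ) :
    lagMoment α (monomial k c) = Real.Gamma (α + k + 1) * c := by
  simp [lagMoment, lsum_apply]

theorem lagMoment_C_mul_X_pow (α c : ℝ) (k : ℕ) :
    lagMoment α (C c * X ^ k) = Real.Gamma (α + k + 1) * c := by
  rw [C_mul_X_pow_eq_monomial, lagMoment_monomial]

theorem lagMoment_monicLaguerre_mul_X_pow_eq_zero {α : ℝ} (hα : -1 < α) {m n : ℕ}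
    (hmn : m < n) : lagMoment α (monicLaguerre α n * X ^ m) = 0 := by
  have hterm : ∀ k ∈ range (n + 1),
      lagMoment α (C ((-1) ^ (n - k) * n.choose k *
          (ascPochhammer ℝ (n - k)).eval (α + k + 1)) * X ^ k * X ^ m) =
        Real.Gamma (α + n + 1) * (((-1 : ℤ) ^ (n - k) * n.choose k) •
          (ascPochhammer ℝ m).eval (α + 1 + k • (1 : ℝ))) := by
    intro k hk
    obtain ⟨j, rfl⟩ := Nat.exists_eq_add_of_le (Nat.lt_succ_iff.mp (mem_range.mp hk))
    have hpos : 0 < α + k + 1 := by linarith [(Nat.cast_nonneg k : (0 : ℝ) ≤ k)]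
    have hGamma_m := Real.Gamma_add_nat_eq_mul_ascPochhammer hpos m
    have hGamma_j := Real.Gamma_add_nat_eq_mul_ascPochhammer hpos j
    rw [mul_assoc, ← pow_add, lagMoment_C_mul_X_pow, Nat.add_sub_cancel_left, Nat.cast_add,
      Nat.cast_add, show α + (k + m) + 1 = α + k + 1 + m by ring,
      show α + (k + j) + 1 = α + k + 1 + j by ring, hGamma_m, hGamma_j,
      show α + 1 + k • (1 : ℝ) = α + k + 1 by rw [nsmul_one]; ring, zsmul_eq_mul]
    push_cast
    ring
  -- the sum is the `n`-th forward difference at `α + 1` of the degree-`m` polynomial `(·)_m`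
  have hΔ := fwdDiff_iter_eq_sum_shift (1 : ℝ) (ascPochhammer ℝ m).eval n (α + 1)
  rw [Polynomial.fwdDiff_iter_eq_zero_of_degree_lt (by rwa [ascPochhammer_natDegree]),
    Pi.zero_apply] at hΔ
  rw [monicLaguerre, sum_mul, map_sum, sum_congr rfl hterm, ← mul_sum, ← hΔ, mul_zero]

theorem lagMoment_monicLaguerre_mul_eq_zero_of_natDegree_lt {α : ℝ} (hα : -1 < α) {n : ℕ}
    {P : ℝ[X]} (hP : P.natDegree < n) : lagMoment α (monicLaguerre α n * P) = 0 := by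
  rw [P.as_sum_range_C_mul_X_pow, mul_sum, map_sum]
  refine sum_eq_zero fun k hk => ?_
  rw [mul_left_comm, ← smul_eq_C_mul, map_smul,
    lagMoment_monicLaguerre_mul_X_pow_eq_zero hα (by have := mem_range.mp hk; omega), smul_zero]

theorem lagMoment_monicLaguerre_mul_monicLaguerre_eq_zero {α : ℝ} (hα : -1 < α) {m n : ℕ}
    (hmn : m ≠ n) : lagMoment α (monicLaguerre α m * monicLaguerre α n) = 0 := by
  rcases hmn.lt_or_gt with h | h
  · rw [mul_comm]
    exact lagMoment_monicLaguerre_mul_eq_zero_of_natDegree_lt hα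
      ((natDegree_monicLaguerre_le α m).trans_lt h)
  · exact lagMoment_monicLaguerre_mul_eq_zero_of_natDegree_lt hα
      ((natDegree_monicLaguerre_le α n).trans_lt h)

theorem lagMoment_monicLaguerre_sub_one_mul_eq_zero {α : ℝ} (hα : -1 < α) {m n : ℕ}
    (hmn : m + 2 ≤ n ∨ n + 2 ≤ m) :
    lagMoment α (monicLaguerre (α - 1) m * monicLaguerre (α - 1) n) = 0 := by
  wlog h : m + 2 ≤ n generalizing m n
  · rw [mul_comm]
    exact this hmn.symm (hmn.resolve_left h)
  have hdeg := natDegree_monicLaguerre_le (α - 1) m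
  rw [monicLaguerre_eq_add (α - 1) n, sub_add_cancel, mul_add, mul_left_comm, ← nsmul_eq_mul,
    map_add, map_nsmul, mul_comm (monicLaguerre (α - 1) m),
    lagMoment_monicLaguerre_mul_eq_zero_of_natDegree_lt hα (by omega),
    mul_comm (monicLaguerre (α - 1) m),
    lagMoment_monicLaguerre_mul_eq_zero_of_natDegree_lt hα (by omega), smul_zero, add_zero]

theorem lagMoment_derivative_mul_derivative_eq_zero {α : ℝ} (hα : -1 < α) {m n : ℕ}
    (h : m ≠ n) :
    lagMoment α (derivative (monicLaguerre (α - 1) m) *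
      derivative (monicLaguerre (α - 1) n)) = 0 := by
  rw [derivative_monicLaguerre, derivative_monicLaguerre, sub_add_cancel, mul_mul_mul_comm,
    ← Nat.cast_mul, ← nsmul_eq_mul, map_nsmul]
  rcases Nat.eq_zero_or_pos m with rfl | hm
  · rw [zero_mul, zero_smul]
  rcases Nat.eq_zero_or_pos n with rfl | hn
  · rw [mul_zero, zero_smul]
  rw [lagMoment_monicLaguerre_mul_monicLaguerre_eq_zero hα (by omega), smul_zero]

noncomputable def lagWeight (α x : ℝ) : ℝ :=
  Real.rpow x α * Real.exp (-x)

theorem eqOn_Gamma_integrand (α : ℝ) (k : ℕ) :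
    Set.EqOn (fun x => Real.exp (-x) * x ^ (α + k + 1 - 1))
      (fun x => x ^ k * lagWeight α x) (Set.Ioi 0) := fun x hx => by
  simp only [lagWeight]
  rw [add_sub_cancel_right, Real.rpow_add hx, Real.rpow_natCast, Real.rpow_eq_pow]
  ring

theorem integrableOn_eval_mul_lagWeight {α : ℝ} (hα : -1 < α) (P : ℝ[X]) :
    IntegrableOn (fun x => P.eval x * lagWeight α x) (Set.Ioi 0) := by
  induction P using Polynomial.induction_on' with
  | add P Q hP hQ =>
    simp only [eval_add, add_mul]
    exact hP.add hQ
  | monomial k c =>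
    have hpos : 0 < α + k + 1 := by linarith [(Nat.cast_nonneg k : (0 : ℝ) ≤ k)]
    simp only [eval_monomial, mul_assoc]
    exact ((Real.GammaIntegral_convergent hpos).congr_fun (eqOn_Gamma_integrand α k)
        measurableSet_Ioi).const_mul c

theorem integral_eval_mul_lagWeight {α : ℝ} (hα : -1 < α) (P : ℝ[X]) :
    ∫ x in Set.Ioi 0, P.eval x * lagWeight α x = lagMoment α P := by
  induction P using Polynomial.induction_on' with
  | add P Q hP hQ =>
    simp only [eval_add, add_mul, map_add]
    rw [integral_add (integrableOn_eval_mul_lagWeight hα P)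
      (integrableOn_eval_mul_lagWeight hα Q), hP, hQ]
  | monomial k c =>
    have hpos : 0 < α + k + 1 := by linarith [(Nat.cast_nonneg k : (0 : ℝ) ≤ k)]
    simp only [eval_monomial, mul_assoc]
    rw [integral_const_mul, lagMoment_monomial, Real.Gamma_eq_integral hpos,
      setIntegral_congr_fun measurableSet_Ioi (eqOn_Gamma_integrand α k), mul_comm]

theorem integrableOn_prod_eval_mul_lagWeight {α β : ℝ} (hα : -1 < α) (hβ : -1 < β)
    (P Q : ℝ[X]) :
    IntegrableOn (fun p : ℝ × ℝ => P.eval p.1 * lagWeight α p.1 *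
      (Q.eval p.2 * lagWeight β p.2)) (Set.Ioi 0 ×ˢ Set.Ioi 0) := by
  rw [IntegrableOn, Measure.volume_eq_prod, ← Measure.prod_restrict]
  exact (integrableOn_eval_mul_lagWeight hα P).mul_prod (integrableOn_eval_mul_lagWeight hβ Q)

theorem integral_prod_eval_mul_lagWeight {α β : ℝ} (hα : -1 < α) (hβ : -1 < β)
    (P Q : ℝ[X]) :
    ∫ p in Set.Ioi 0 ×ˢ Set.Ioi 0, P.eval p.1 * lagWeight α p.1 *
      (Q.eval p.2 * lagWeight β p.2) = lagMoment α P * lagMoment β Q := by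
  rw [Measure.volume_eq_prod, ← Measure.prod_restrict,
    integral_prod_mul (fun x => P.eval x * lagWeight α x)
      (fun y => Q.eval y * lagWeight β y),
    integral_eval_mul_lagWeight hα, integral_eval_mul_lagWeight hβ]

theorem lagGrad_eval_mul_eval {α β : ℝ} (hα : -1 < α) (hβ : -1 < β) (f g u v : ℝ[X]) :
    lagGrad α β (fun x y => f.eval x * u.eval y) (fun x y => g.eval x * v.eval y) =
      1 / (Real.Gamma (α + 1) * Real.Gamma (β + 1)) *
        (lagMoment α (derivative f * derivative g) * lagMoment β (u * v) +
          lagMoment α (f * g) * lagMoment β (derivative u * derivative v)) := by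
  have hderiv_x (P Q : ℝ[X]) (x y : ℝ) :
      deriv (fun t => P.eval t * Q.eval y) x = (derivative P).eval x * Q.eval y :=
    ((P.hasDerivAt x).mul_const _).deriv
  have hderiv_y (P Q : ℝ[X]) (x y : ℝ) :
      deriv (fun t => P.eval x * Q.eval t) y = P.eval x * (derivative Q).eval y :=
    ((Q.hasDerivAt y).const_mul _).deriv
  have hintegrand : ∀ p : ℝ × ℝ,
      ((derivative f).eval p.1 * u.eval p.2 * ((derivative g).eval p.1 * v.eval p.2) +
          f.eval p.1 * (derivative u).eval p.2 * (g.eval p.1 * (derivative v).eval p.2)) *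
        (Real.rpow p.1 α * Real.exp (-p.1) * (Real.rpow p.2 β * Real.exp (-p.2))) =
      (derivative f * derivative g).eval p.1 * lagWeight α p.1 *
          ((u * v).eval p.2 * lagWeight β p.2) +
        (f * g).eval p.1 * lagWeight α p.1 *
          ((derivative u * derivative v).eval p.2 * lagWeight β p.2) :=
    fun p => by simp only [eval_mul, lagWeight]; ring
  simp only [lagGrad, hderiv_x, hderiv_y, hintegrand]
  rw [integral_add (integrableOn_prod_eval_mul_lagWeight hα hβ _ _)
      (integrableOn_prod_eval_mul_lagWeight hα hβ _ _),
    integral_prod_eval_mul_lagWeight hα hβ, integral_prod_eval_mul_lagWeight hα hβ]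

/-- For the product Laguerre weight, `⟨Q_i^n, Q_l^m⟩_∇ = 0` whenever `|n - m| ≥ 2`. -/
theorem lagGrad_far_orthogonal (α β : ℝ) (hα : -1 < α) (hβ : -1 < β)
    (n m i l : ℕ) (hi : i ≤ n) (hl : l ≤ m) (hnm : 2 ≤ |(n : ℤ) - m|) :
    lagGrad α β (lagQ2 α β n i) (lagQ2 α β m l) = 0 := by
  have hQ2 (n i : ℕ) : lagQ2 α β n i = fun x y =>
      (monicLaguerre (α - 1) (n - i)).eval x * (monicLaguerre (β - 1) i).eval y := by
    funext x y
    rw [lagQ2, lagQ_eq_eval hα, lagQ_eq_eval hβ]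
  have hfar : n + 2 ≤ m ∨ m + 2 ≤ n := by rcases le_abs'.mp hnm with h | h <;> omega
  have hx_term : lagMoment α (derivative (monicLaguerre (α - 1) (n - i)) *
        derivative (monicLaguerre (α - 1) (m - l))) *
      lagMoment β (monicLaguerre (β - 1) i * monicLaguerre (β - 1) l) = 0 := by
    by_cases h : n - i = m - l
    · rw [lagMoment_monicLaguerre_sub_one_mul_eq_zero hβ (by omega), mul_zero]
    · rw [lagMoment_derivative_mul_derivative_eq_zero hα h, zero_mul]
  have hy_term : lagMoment α (monicLaguerre (α - 1) (n - i) * monicLaguerre (α - 1) (m - l)) *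
      lagMoment β (derivative (monicLaguerre (β - 1) i) *
        derivative (monicLaguerre (β - 1) l)) = 0 := by
    by_cases h : i = l
    · rw [lagMoment_monicLaguerre_sub_one_mul_eq_zero hα (by omega), zero_mul]
    · rw [lagMoment_derivative_mul_derivative_eq_zero hβ h, mul_zero]
  rw [hQ2, hQ2, lagGrad_eval_mul_eval hα hβ, hx_term, hy_term, add_zero, mul_zero]
end

section
/- In the product Laguerre setting, the polynomials Q_0^n(x,y) = q_n(w_α;x) and Q_n^n(x,y) = q_n(w_β;y) are themselves ∇-orthogonal of degree n, i.e. S_0^n = Q_0^n and S_n^n = Q_n^n (up to an additive constant) are monic orthogonal polynomials for the bilinear form ⟨·,·⟩_∇. -/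
open Finset MeasureTheory

/-!
Since `p_n' + n p_{n-1}' = n p_{n-1}`, the `x`-derivative of `q_n(w_α;x)` is `n p_{n-1}(w_α;x)`.
By Fubini, `⟨q_n(w_α;·), P⟩_∇` is then an integral over `y` of
`∫ n p_{n-1}(w_α;x) ∂ₓP(x,y) w_α(x) dx`, and for fixed `y` the polynomial `∂ₓP(·,y)` has degree
`< n-1`, so this vanishes by orthogonality of `p_{n-1}(w_α;·)`. That orthogonality is read off the
explicit coefficients: tested against `x^k`, it becomes the `n-1`-st finite difference of the
degree-`k` polynomial `m ↦ (m+α+1)_k`, which is zero for `k < n-1`. The case of `q_n(w_β;y)` is the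
same after swapping the variables.
-/

open Polynomial Set

theorem sum_range_neg_one_pow_mul_choose_mul_eval_eq_zero {R : Type*} [CommRing R] (p : R[X])
    {N : ℕ} (hp : p.natDegree < N) :
    ∑ m ∈ range (N + 1), (-1) ^ m * (N.choose m : R) * p.eval (m : R) = 0 := by
  have hΔ := congr_fun (fwdDiff_iter_eq_zero_of_degree_lt hp) 0
  rw [fwdDiff_iter_eq_sum_shift] at hΔ
  calc ∑ m ∈ range (N + 1), (-1) ^ m * (N.choose m : R) * p.eval (m : R)
      = (-1) ^ N * ∑ m ∈ range (N + 1),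
          ((-1 : ℤ) ^ (N - m) * N.choose m) • p.eval (0 + m • (1 : R)) := by
        rw [mul_sum]
        refine sum_congr rfl fun m hm => ?_
        obtain ⟨j, rfl⟩ := Nat.exists_eq_add_of_le (Nat.lt_succ_iff.mp (mem_range.mp hm))
        simp only [zsmul_eq_mul, nsmul_eq_mul, mul_one, zero_add, Nat.add_sub_cancel_left]
        push_cast
        have hj : ((-1 : R) ^ j) ^ 2 = 1 := by rw [← pow_mul, mul_comm, pow_mul]; simp
        linear_combination -(-1) ^ m * ((m + j).choose m : R) * p.eval (m : R) * hj
    _ = 0 := by simpa using hΔ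

theorem Real.Gamma_add_nat_eq_ascPochhammer_mul {s : ℝ} (hs : 0 < s) (k : ℕ) :
    Real.Gamma (s + k) = (ascPochhammer ℝ k).eval s * Real.Gamma s := by
  induction k with
  | zero => simp
  | succ k ih =>
    rw [Nat.cast_succ, ← add_assoc, Real.Gamma_add_one (by positivity), ih,
      ascPochhammer_succ_eval]
    ring

noncomputable def laguerreWeight (α x : ℝ) : ℝ :=
  x ^ α * Real.exp (-x)

lemma pow_mul_laguerreWeight {α x : ℝ} (hx : 0 < x) (d : ℕ) :
    x ^ d * laguerreWeight α x = Real.exp (-x) * x ^ ((d + α + 1) - 1) := by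
  rw [laguerreWeight, add_sub_cancel_right, Real.rpow_add hx, Real.rpow_natCast]
  ring

lemma integrableOn_pow_mul_laguerreWeight {α : ℝ} (hα : -1 < α) (d : ℕ) :
    IntegrableOn (fun x => x ^ d * laguerreWeight α x) (Ioi 0) := by
  have hs : (0 : ℝ) < d + α + 1 := by linarith [d.cast_nonneg (α := ℝ)]
  exact (Real.GammaIntegral_convergent hs).congr_fun
    (fun _ hx => (pow_mul_laguerreWeight hx d).symm) measurableSet_Ioi

lemma integral_pow_mul_laguerreWeight {α : ℝ} (hα : -1 < α) (d : ℕ) :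
    ∫ x in Ioi 0, x ^ d * laguerreWeight α x = Real.Gamma (d + α + 1) := by
  rw [Real.Gamma_eq_integral (by linarith [d.cast_nonneg (α := ℝ)])]
  exact setIntegral_congr_fun measurableSet_Ioi fun _ hx => pow_mul_laguerreWeight hx d

lemma integrableOn_eval_mul_laguerreWeight {α : ℝ} (hα : -1 < α) (p : ℝ[X]) :
    IntegrableOn (fun x => p.eval x * laguerreWeight α x) (Ioi 0) := by
  simp_rw [eval_eq_sum_range, sum_mul, mul_assoc]
  exact integrable_finsetSum _ fun d _ => (integrableOn_pow_mul_laguerreWeight hα d).const_mul _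

noncomputable def lagCoeff (α : ℝ) (N m : ℕ) : ℝ :=
  (-1) ^ (N + m) * N.choose m * (Real.Gamma (N + α + 1) / Real.Gamma (m + α + 1))

noncomputable def lagPoly (α : ℝ) (N : ℕ) : ℝ[X] :=
  ∑ m ∈ range (N + 1), C (lagCoeff α N m) * X ^ m

lemma lagMonic_eq_eval_lagPoly (α : ℝ) (N : ℕ) (x : ℝ) :
    lagMonic α N x = (lagPoly α N).eval x := by
  rw [lagMonic, laguerre, lagPoly, eval_finsetSum, mul_sum]
  refine sum_congr rfl fun m hm => ?_
  have hmN : m ≤ N := Nat.lt_succ_iff.mp (mem_range.mp hm)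
  rw [eval_C_mul, eval_X_pow, lagCoeff, Nat.cast_choose ℝ hmN, pow_add, div_mul_eq_div_div]
  field_simp

lemma coeff_lagPoly (α : ℝ) (N k : ℕ) : (lagPoly α N).coeff k = lagCoeff α N k := by
  simp only [lagPoly, finsetSum_coeff, coeff_C_mul_X_pow, sum_ite_eq, Finset.mem_range]
  split_ifs with hk
  · rfl
  · rw [lagCoeff, Nat.choose_eq_zero_of_lt (by omega)]
    simp

lemma lagCoeff_mul_Gamma {α : ℝ} (hα : -1 < α) (N m k : ℕ) :
    lagCoeff α N m * Real.Gamma ((m + k : ℕ) + α + 1) = (-1) ^ N * Real.Gamma (N + α + 1) *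
      ((-1) ^ m * N.choose m * ((ascPochhammer ℝ k).comp (X + C (α + 1))).eval (m : ℝ)) := by
  have hpos : (0 : ℝ) < m + α + 1 := by linarith [m.cast_nonneg (α := ℝ)]
  rw [show ((m + k : ℕ) : ℝ) + α + 1 = (m + α + 1) + k by push_cast; ring,
    Real.Gamma_add_nat_eq_ascPochhammer_mul hpos, lagCoeff, eval_comp]
  simp only [eval_add, eval_X, eval_C, pow_add]
  field_simp [(Real.Gamma_pos_of_pos hpos).ne']
  ring_nf

lemma integral_lagMonic_mul_pow_mul_laguerreWeight {α : ℝ} (hα : -1 < α) {N k : ℕ}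
    (hk : k < N) :
    ∫ x in Ioi 0, lagMonic α N x * (x ^ k * laguerreWeight α x) = 0 := by
  have hexpand : ∀ x, lagMonic α N x * (x ^ k * laguerreWeight α x) =
      ∑ m ∈ range (N + 1), lagCoeff α N m * (x ^ (m + k) * laguerreWeight α x) := by
    intro x
    simp only [lagMonic_eq_eval_lagPoly, lagPoly, eval_finsetSum, eval_C_mul, eval_X_pow, sum_mul,
      pow_add]
    exact sum_congr rfl fun m _ => by ring
  have hdeg : ((ascPochhammer ℝ k).comp (X + C (α + 1))).natDegree < N := by
    rwa [natDegree_comp, ascPochhammer_natDegree, natDegree_X_add_C, mul_one]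
  simp_rw [hexpand]
  rw [integral_finsetSum _ fun m _ => (integrableOn_pow_mul_laguerreWeight hα _).const_mul _]
  simp_rw [integral_const_mul, integral_pow_mul_laguerreWeight hα, lagCoeff_mul_Gamma hα,
    ← mul_sum, sum_range_neg_one_pow_mul_choose_mul_eval_eq_zero _ hdeg, mul_zero]

lemma integral_lagMonic_mul_eval_mul_laguerreWeight {α : ℝ} (hα : -1 < α) {N : ℕ} {q : ℝ[X]}
    (hq : q.degree < N) :
    ∫ x in Ioi 0, lagMonic α N x * q.eval x * laguerreWeight α x = 0 := by
  rcases eq_or_ne q 0 with rfl | hq0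
  · simp
  have hexpand : ∀ x, lagMonic α N x * q.eval x * laguerreWeight α x =
      ∑ i ∈ range N, q.coeff i * (lagMonic α N x * (x ^ i * laguerreWeight α x)) := by
    intro x
    rw [eval_eq_sum_range' ((natDegree_lt_iff_degree_lt hq0).mpr hq), mul_sum, sum_mul]
    exact sum_congr rfl fun i _ => by ring
  have hint :
      ∀ i, IntegrableOn (fun x => lagMonic α N x * (x ^ i * laguerreWeight α x)) (Ioi 0) :=
    fun i => (integrableOn_eval_mul_laguerreWeight hα (lagPoly α N * X ^ i)).congr_fun
      (fun x _ => by dsimp only; rw [eval_mul, eval_X_pow, lagMonic_eq_eval_lagPoly, mul_assoc])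
      measurableSet_Ioi
  simp_rw [hexpand]
  rw [integral_finsetSum _ fun i _ => (hint i).const_mul _]
  exact sum_eq_zero fun i hi => by
    rw [integral_const_mul, integral_lagMonic_mul_pow_mul_laguerreWeight hα (mem_range.mp hi),
      mul_zero]

lemma Nat.cast_add_one_mul_choose_add_one {R : Type*} [CommRing R] (N k : ℕ) :
    ((k : R) + 1) * N.choose (k + 1) = (N - k) * N.choose k := by
  rcases le_or_gt k N with hk | hk
  · rw [mul_comm, mul_comm _ (N.choose k : R), ← Nat.cast_sub hk]
    exact_mod_cast congrArg (Nat.cast : ℕ → R) (Nat.choose_succ_right_eq N k)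
  · rw [Nat.choose_eq_zero_of_lt hk, Nat.choose_eq_zero_of_lt (by omega)]
    simp

lemma lagCoeff_succ_recurrence {α : ℝ} (hα : -1 < α) (N k : ℕ) :
    ((k : ℝ) + 1) * (lagCoeff α (N + 1) (k + 1) + (N + 1) * lagCoeff α N (k + 1)) =
      (N + 1) * lagCoeff α N k := by
  have hN : (0 : ℝ) < N + α + 1 := by linarith [N.cast_nonneg (α := ℝ)]
  have hk : (0 : ℝ) < k + α + 1 := by linarith [k.cast_nonneg (α := ℝ)]
  have hchoose : ((k : ℝ) + 1) * (N + 1).choose (k + 1) = (N + 1) * N.choose k := by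
    rw [mul_comm]
    exact_mod_cast (Nat.add_one_mul_choose_eq N k).symm
  simp only [lagCoeff, Nat.cast_succ, add_right_comm _ (1 : ℝ) α, Real.Gamma_add_one hN.ne',
    Real.Gamma_add_one hk.ne']
  rw [show N + 1 + (k + 1) = N + k + 2 by ring, show N + (k + 1) = N + k + 1 by ring]
  simp only [pow_succ]
  field_simp [(Real.Gamma_pos_of_pos hk).ne']
  linear_combination
    (N + α + 1) * hchoose - (N + 1) * Nat.cast_add_one_mul_choose_add_one (R := ℝ) N k

lemma derivative_lagPoly_succ_add {α : ℝ} (hα : -1 < α) (N : ℕ) :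
    derivative (lagPoly α (N + 1) + C ((N : ℝ) + 1) * lagPoly α N) =
      C ((N : ℝ) + 1) * lagPoly α N := by
  ext k
  simp only [derivative_add, derivative_C_mul, coeff_add, coeff_derivative, coeff_C_mul,
    coeff_lagPoly]
  linear_combination lagCoeff_succ_recurrence hα N k

lemma hasDerivAt_lagQ_succ {α : ℝ} (hα : -1 < α) (N : ℕ) (x : ℝ) :
    HasDerivAt (lagQ α (N + 1)) ((N + 1) * lagMonic α N x) x := by
  have hQ :
      lagQ α (N + 1) = fun t => (lagPoly α (N + 1) + C ((N : ℝ) + 1) * lagPoly α N).eval t := by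
    ext t
    simp [lagQ, lagMonic_eq_eval_lagPoly]
  rw [hQ]
  refine ((lagPoly α (N + 1) + C ((N : ℝ) + 1) * lagPoly α N).hasDerivAt x).congr_deriv ?_
  rw [derivative_lagPoly_succ_add hα, eval_C_mul, lagMonic_eq_eval_lagPoly]

noncomputable def sliceFst (P : MvPolynomial (Fin 2) ℝ) (y : ℝ) : ℝ[X] :=
  (MvPolynomial.finSuccEquiv ℝ 1 P).map (MvPolynomial.eval ![y])

lemma eval_sliceFst (P : MvPolynomial (Fin 2) ℝ) (x y : ℝ) : (sliceFst P y).eval x = pev P x y :=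
  (MvPolynomial.eval_eq_eval_mv_eval' ![y] x P).symm

lemma natDegree_sliceFst_le (P : MvPolynomial (Fin 2) ℝ) (y : ℝ) :
    (sliceFst P y).natDegree ≤ P.totalDegree :=
  natDegree_map_le.trans <| (MvPolynomial.natDegree_finSuccEquiv P).trans_le <|
    MvPolynomial.degreeOf_le_totalDegree P 0

lemma pev_rename_swap (P : MvPolynomial (Fin 2) ℝ) (x y : ℝ) :
    pev (MvPolynomial.rename (Equiv.swap 0 1) P) x y = pev P y x := by
  have hswap : ![x, y] ∘ Equiv.swap 0 1 = ![y, x] := by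
    ext i
    fin_cases i <;> rfl
  rw [pev, pev, MvPolynomial.eval_rename, hswap]

lemma lagGrad_swap (α β : ℝ) (F G : ℝ → ℝ → ℝ) :
    lagGrad α β F G = lagGrad β α (fun x y => F y x) (fun x y => G y x) := by
  simp only [lagGrad, Measure.volume_eq_prod, ← Measure.prod_restrict]
  rw [mul_comm (Real.Gamma (α + 1)), ← integral_prod_swap]
  congr 2 with p
  simp only [Prod.fst_swap, Prod.snd_swap]
  ring

lemma lagGrad_eq_zero_of_fst (α β : ℝ) (f : ℝ → ℝ) (G : ℝ → ℝ → ℝ)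
    (h : ∀ y, ∫ x in Ioi 0, deriv f x * deriv (fun t => G t y) x * laguerreWeight α x = 0) :
    lagGrad α β (fun x _ => f x) G = 0 := by
  simp only [lagGrad, deriv_const', zero_mul, add_zero, Measure.volume_eq_prod,
    ← Measure.prod_restrict]
  -- a non-integrable integrand has Bochner integral `0` anyway
  by_cases hint : Integrable (fun p : ℝ × ℝ =>
      deriv (fun t => f t) p.1 * deriv (fun t => G t p.2) p.1 *
        (p.1.rpow α * Real.exp (-p.1) * (p.2.rpow β * Real.exp (-p.2))))
      ((volume.restrict (Ioi 0)).prod (volume.restrict (Ioi 0)))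
  · rw [integral_prod_symm _ hint]
    have hinner : ∀ y, ∫ x in Ioi 0, deriv f x * deriv (fun t => G t y) x *
        (laguerreWeight α x * (y ^ β * Real.exp (-y))) = 0 := fun y => by
      simp_rw [← mul_assoc, integral_mul_const, h y, zero_mul]
    simp only [laguerreWeight] at hinner
    simp only [Real.rpow_eq_pow, hinner, integral_zero, mul_zero]
  · rw [integral_undef hint, mul_zero]

lemma degree_derivative_lt_of_natDegree_le {R : Type*} [Semiring R] {q : R[X]} {N : ℕ}
    (hq : q.natDegree ≤ N) :
    (derivative q).degree < N := by
  rcases eq_or_ne q 0 with rfl | hq0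
  · simp
  · exact (degree_derivative_lt hq0).trans_le (degree_le_natDegree.trans (by exact_mod_cast hq))

lemma lagGrad_lagQ_fst_eq_zero {α : ℝ} (hα : -1 < α) (β : ℝ) {n : ℕ}
    (P : MvPolynomial (Fin 2) ℝ) (hP : P.totalDegree < n) :
    lagGrad α β (fun x _ => lagQ α n x) (pev P) = 0 := by
  obtain ⟨N, rfl⟩ : ∃ N, n = N + 1 := Nat.exists_eq_succ_of_ne_zero (by omega)
  refine lagGrad_eq_zero_of_fst α β _ _ fun y => ?_
  have hslice : (fun t => pev P t y) = fun t => (sliceFst P y).eval t :=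
    funext fun t => (eval_sliceFst P t y).symm
  have hdeg : (derivative (sliceFst P y)).degree < N :=
    degree_derivative_lt_of_natDegree_le ((natDegree_sliceFst_le P y).trans (by omega))
  calc ∫ x in Ioi 0, deriv (lagQ α (N + 1)) x * deriv (fun t => pev P t y) x * laguerreWeight α x
      = ∫ x in Ioi 0, (N + 1) *
          (lagMonic α N x * (derivative (sliceFst P y)).eval x * laguerreWeight α x) := by
        congr with x
        rw [(hasDerivAt_lagQ_succ hα N x).deriv, hslice, Polynomial.deriv]
        ring
    _ = 0 := by
        rw [integral_const_mul, integral_lagMonic_mul_eval_mul_laguerreWeight hα hdeg, mul_zero]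

theorem lagQ_extreme_orthogonal_general (α β : ℝ) (hα : -1 < α) (hβ : -1 < β) (n : ℕ)
    (P : MvPolynomial (Fin 2) ℝ) (hP : P.totalDegree < n) :
    lagGrad α β (fun x _ => lagQ α n x) (pev P) = 0 ∧
    lagGrad α β (fun _ y => lagQ β n y) (pev P) = 0 := by
  refine ⟨lagGrad_lagQ_fst_eq_zero hα β P hP, ?_⟩
  have hP' := (MvPolynomial.totalDegree_rename_le (Equiv.swap 0 1) P).trans_lt hP
  rw [lagGrad_swap]
  convert lagGrad_lagQ_fst_eq_zero hβ α _ hP' using 2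
  ext x y
  exact (pev_rename_swap P x y).symm

/-- In the product Laguerre setting, `Q_0^n(x,y) = q_n(w_α;x)` and `Q_n^n(x,y) = q_n(w_β;y)`
are themselves (monic, up to an additive constant) `∇`-orthogonal polynomials of degree `n`:
they are orthogonal to all bivariate polynomials of total degree `≤ n-1`. -/
theorem lagQ_extreme_orthogonal (α β : ℝ) (hα : -1 < α) (hβ : -1 < β) (n : ℕ) (hn : 1 ≤ n)
    (P : MvPolynomial (Fin 2) ℝ) (hP : P.totalDegree < n) :
    lagGrad α β (fun x _ => lagQ α n x) (pev P) = 0 ∧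
    lagGrad α β (fun _ y => lagQ β n y) (pev P) = 0 :=
  lagQ_extreme_orthogonal_general α β hα hβ n P hP
end

section
/- For the product Gegenbauer weight, ⟨Q_i^n, Q_l^m⟩_∇ = 0 whenever n - m is odd or |n - m| ≥ 3, for all 0 ≤ i ≤ n and 0 ≤ l ≤ m; in particular ⟨Q_0^n, Q_l^m⟩_∇ = 0 and ⟨Q_n^n, Q_l^m⟩_∇ = 0 whenever m < n. -/
open Finset MeasureTheory

/-- The classical Gegenbauer (ultraspherical) polynomial. -/
noncomputable def gegenbauer (α : ℝ) (n : ℕ) (x : ℝ) : ℝ :=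
  ∑ k ∈ Finset.range (n / 2 + 1),
    (-1) ^ k * Real.Gamma (((n - k : ℕ) : ℝ) + α) /
      (Real.Gamma α * k.factorial * (n - 2 * k).factorial) * (2 * x) ^ (n - 2 * k)

/-- The monic Gegenbauer polynomial `p_n(u_α;x) = 2^{-n} binom(n+α-1,n)^{-1} C_n^α(x)`. -/
noncomputable def gegMonic (α : ℝ) (n : ℕ) (x : ℝ) : ℝ :=
  (Real.Gamma α * n.factorial / (2 ^ n * Real.Gamma ((n : ℝ) + α))) * gegenbauer α n x

/-- The coefficient `b_j(α) = -j/(4(j+α)(j+α-1))`, so that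
`b_{m-1}(α) = -(m-1)/(4(m+α-1)(m+α-2))`. -/
noncomputable def bcoef (j : ℕ) (α : ℝ) : ℝ :=
  -((j : ℝ) / (4 * ((j : ℝ) + α) * ((j : ℝ) + α - 1)))

/-- `q_m(u_α;x) = p_m(u_α;x) + m·b_{m-1}(α)·p_{m-2}(u_α;x)`. -/
noncomputable def gegQ (α : ℝ) (m : ℕ) (x : ℝ) : ℝ :=
  gegMonic α m x + m * bcoef (m - 1) α * gegMonic α (m - 2) x

/-- The product monic Gegenbauer polynomials `P_j^m(x,y) = p_{m-j}(u_α;x) p_j(u_β;y)`. -/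
noncomputable def gegP (α β : ℝ) (m j : ℕ) (x y : ℝ) : ℝ :=
  gegMonic α (m - j) x * gegMonic β j y

/-- The polynomials `Q_k^n(x,y) = q_{n-k}(u_α;x) q_k(u_β;y)`. -/
noncomputable def gegQ2 (α β : ℝ) (n k : ℕ) (x y : ℝ) : ℝ :=
  gegQ α (n - k) x * gegQ β k y

/-- The normalized gradient bilinear form for the product Gegenbauer weight
`U_{α,β}(x,y) = (1-x²)^{α-1/2}(1-y²)^{β-1/2}` on `[-1,1]²`; the normalizing constant is
`c_{α,β} = Γ(α+1)Γ(β+1)/(Γ(α+1/2)Γ(β+1/2)Γ(1/2)²)` with `Γ(1/2)² = π`. -/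
noncomputable def gegGrad (α β : ℝ) (f g : ℝ → ℝ → ℝ) : ℝ :=
  (Real.Gamma (α + 1) * Real.Gamma (β + 1) /
      (Real.Gamma (α + 1 / 2) * Real.Gamma (β + 1 / 2) * Real.pi)) *
    ∫ p in (Set.Ioc (-1 : ℝ) 1) ×ˢ (Set.Ioc (-1 : ℝ) 1),
      (deriv (fun t => f t p.2) p.1 * deriv (fun t => g t p.2) p.1 +
        deriv (fun t => f p.1 t) p.2 * deriv (fun t => g p.1 t) p.2) *
      (Real.rpow (1 - p.1 ^ 2) (α - 1 / 2) * Real.rpow (1 - p.2 ^ 2) (β - 1 / 2))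

/-- `h_n^γ = 2^{1-2γ-2n} √π n! Γ(γ+1) Γ(n+2γ) / (Γ(γ+1/2) Γ(n+γ) Γ(n+γ+1))`. -/
noncomputable def hGeg (γ : ℝ) (n : ℕ) : ℝ :=
  Real.rpow 2 (1 - 2 * γ - 2 * n) * Real.sqrt Real.pi * n.factorial * Real.Gamma (γ + 1) *
    Real.Gamma ((n : ℝ) + 2 * γ) /
      (Real.Gamma (γ + 1 / 2) * Real.Gamma ((n : ℝ) + γ) * Real.Gamma ((n : ℝ) + γ + 1))

/-!
The gradient form of a product `f₁(x) f₂(y)` against `g₁(x) g₂(y)` splits into one-variable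
products for the weights `(1 - x²)^(γ - 1/2)`:
`⟨f₁', g₁'⟩_α ⟨f₂, g₂⟩_β + ⟨f₁, g₁⟩_α ⟨f₂', g₂'⟩_β`.
The monic Gegenbauer polynomial `p_n` is an eigenfunction, with eigenvalue `-n(n + 2γ)`, of
`(1 - x²) D² - (2γ + 1) x D`, which integration by parts shows to be symmetric for the weight
`(1 - x²)^(γ - 1/2)`; as the eigenvalues are distinct for `γ > -1/2`, the `p_n` are orthogonal.
The correction term in `q_m` is chosen so that `q_m' = m p_{m-1}`. Hence `⟨q_a', q_b'⟩ = 0` unless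
`a = b ≠ 0`, and `⟨q_a, q_b⟩ = 0` as soon as `{a, a - 2}` and `{b, b - 2}` are disjoint, which is
the case when `a - b` is odd or `|a - b| ≥ 3`. Under the hypotheses of the theorem, each of the two
products has a vanishing factor.
-/

open Polynomial Nat Set

theorem Finset.sum_range_eq_sum_range_of_eq_zero {M : Type*} [AddCommMonoid M] {f : ℕ → M}
    {a b c : ℕ} (ha : c ≤ a) (hb : c ≤ b) (hf : ∀ k, c ≤ k → f k = 0) :
    ∑ k ∈ range a, f k = ∑ k ∈ range b, f k := by
  have h : ∀ d, c ≤ d → ∑ k ∈ range c, f k = ∑ k ∈ range d, f k := fun d hd =>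
    sum_subset (range_subset_range.mpr hd) fun k hk hkc => hf k (by simpa using hkc)
  rw [← h a ha, ← h b hb]

theorem Finset.sum_range_succ_add_eq_zero {M : Type*} [AddCommMonoid M] {f g : ℕ → M} {N : ℕ}
    (hg : g 0 = 0) (hf : f N = 0) (hfg : ∀ k < N, f k + g (k + 1) = 0) :
    ∑ k ∈ range (N + 1), (f k + g k) = 0 := by
  rw [sum_add_distrib, sum_range_succ, sum_range_succ', hf, hg, add_zero, add_zero,
    ← sum_add_distrib]
  exact sum_eq_zero fun k hk => hfg k (mem_range.mp hk)

noncomputable def gegMonicCoeff (α : ℝ) (n k : ℕ) : ℝ :=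
  (-1) ^ k * n ! * Real.Gamma (((n - k : ℕ) : ℝ) + α) /
    (4 ^ k * k ! * (n - 2 * k)! * Real.Gamma (n + α))

noncomputable def gegMonicPoly (α : ℝ) (n : ℕ) : ℝ[X] :=
  ∑ k ∈ range (n / 2 + 1), C (gegMonicCoeff α n k) * X ^ (n - 2 * k)

noncomputable def gegQPoly (α : ℝ) (m : ℕ) : ℝ[X] :=
  gegMonicPoly α m + C (m * bcoef (m - 1) α) * gegMonicPoly α (m - 2)

noncomputable def gegOperator (γ : ℝ) : ℝ[X] →ₗ[ℝ] ℝ[X] where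
  toFun p := (1 - X ^ 2) * derivative (derivative p) - C (2 * γ + 1) * X * derivative p
  map_add' p q := by simp only [map_add]; ring
  map_smul' c p := by simp only [smul_eq_C_mul, derivative_C_mul, RingHom.id_apply]; ring

theorem eval_gegOperator (γ x : ℝ) (p : ℝ[X]) :
    (gegOperator γ p).eval x =
      (1 - x ^ 2) * p.derivative.derivative.eval x - (2 * γ + 1) * x * p.derivative.eval x := by
  simp [gegOperator]

theorem gegOperator_C_mul_X_pow (γ a : ℝ) (p : ℕ) :
    gegOperator γ (C a * X ^ p) =
      C (a * (p * (p - 1))) * X ^ (p - 2) - C (a * (p * (p + 2 * γ))) * X ^ p := by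
  simp only [gegOperator, LinearMap.coe_mk, AddHom.coe_mk, derivative_C_mul_X_pow]
  match p with
  | 0 => simp
  | 1 => simp; ring
  | p + 2 =>
    simp only [add_tsub_cancel_right, show p + 2 - 1 = p + 1 by rfl, map_mul, map_natCast,
      map_add, map_ofNat, map_sub, map_one]
    push_cast
    ring

theorem derivative_gegMonicPoly (α : ℝ) {n N : ℕ} (hN : n ≤ 2 * N) :
    derivative (gegMonicPoly α n) =
      ∑ k ∈ range N, C (gegMonicCoeff α n k * (n - 2 * k : ℕ)) * X ^ (n - 2 * k - 1) := by
  rw [gegMonicPoly, derivative_sum]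
  simp only [derivative_C_mul_X_pow]
  exact sum_range_eq_sum_range_of_eq_zero (c := (n + 1) / 2) (by omega) (by omega)
    fun k hk => by simp [show n - 2 * k = 0 by omega]

section GammaNeZero

variable {α : ℝ} (hα : Real.Gamma α ≠ 0)
include hα

theorem Gamma_natCast_add_ne_zero (j : ℕ) : Real.Gamma (j + α) ≠ 0 := by
  rw [Ne, Real.Gamma_eq_zero_iff] at hα ⊢
  rintro ⟨m, hm⟩
  exact hα ⟨m + j, by push_cast; linarith⟩

theorem natCast_add_ne_zero_of_Gamma_ne_zero (j : ℕ) : (j : ℝ) + α ≠ 0 :=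
  fun h => Gamma_natCast_add_ne_zero hα j (by rw [h, Real.Gamma_zero])

theorem Gamma_natCast_succ_add (j : ℕ) :
    Real.Gamma (((j + 1 : ℕ) : ℝ) + α) = (j + α) * Real.Gamma (j + α) := by
  rw [Nat.cast_succ, add_right_comm,
    Real.Gamma_add_one (natCast_add_ne_zero_of_Gamma_ne_zero hα j)]

theorem gegMonicCoeff_zero (n : ℕ) : gegMonicCoeff α n 0 = 1 := by
  have := Gamma_natCast_add_ne_zero hα n
  simp [gegMonicCoeff, factorial_ne_zero, this]

theorem gegMonicCoeff_succ_mul {n k j : ℕ} (hn : n = 2 * k + 2 + j) :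
    gegMonicCoeff α n (k + 1) * (4 * (k + 1) * (k + 1 + j + α)) =
      -(gegMonicCoeff α n k * ((j + 2) * (j + 1))) := by
  unfold gegMonicCoeff
  rw [show n - k = (k + 1 + j) + 1 by omega, show n - (k + 1) = k + 1 + j by omega,
    show n - 2 * (k + 1) = j by omega, show n - 2 * k = j + 1 + 1 by omega,
    Gamma_natCast_succ_add hα, factorial_succ, factorial_succ (j + 1), factorial_succ j]
  have := Gamma_natCast_add_ne_zero hα n
  push_cast
  field_simp
  ring

theorem gegMonicCoeff_derivative {n k j : ℕ} (hn : n = 2 * k + 1 + j) :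
    (j + 1) * (gegMonicCoeff α (n + 2) (k + 1) +
        (n + 2 : ℕ) * bcoef (n + 1) α * gegMonicCoeff α n k) =
      (n + 2 : ℕ) * gegMonicCoeff α (n + 1) (k + 1) := by
  unfold gegMonicCoeff bcoef
  rw [show ((n + 1 : ℕ) : ℝ) + α - 1 = n + α by push_cast; ring,
    show n + 2 - (k + 1) = (k + 1 + j) + 1 by omega, show n - k = k + 1 + j by omega,
    show n + 1 - (k + 1) = k + 1 + j by omega, show n + 2 - 2 * (k + 1) = j + 1 by omega,
    show n - 2 * k = j + 1 by omega, show n + 1 - 2 * (k + 1) = j by omega,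
    show n + 2 = n + 1 + 1 by rfl, Gamma_natCast_succ_add hα (k + 1 + j),
    Gamma_natCast_succ_add hα (n + 1), Gamma_natCast_succ_add hα n, factorial_succ (n + 1),
    factorial_succ n, factorial_succ j, factorial_succ k]
  have := Gamma_natCast_add_ne_zero hα n
  have := natCast_add_ne_zero_of_Gamma_ne_zero hα n
  have := natCast_add_ne_zero_of_Gamma_ne_zero hα (n + 1)
  subst hn
  push_cast at *
  field_simp
  ring

theorem gegMonic_eq_eval (n : ℕ) : gegMonic α n = fun x => (gegMonicPoly α n).eval x := by
  ext x
  simp only [gegMonic, gegenbauer, gegMonicPoly, gegMonicCoeff, eval_finsetSum, eval_mul, eval_C,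
    eval_pow, eval_X, mul_sum]
  refine sum_congr rfl fun k hk => ?_
  have h4 : (2 : ℝ) ^ n = 4 ^ k * 2 ^ (n - 2 * k) := by
    rw [show (4 : ℝ) = 2 ^ 2 by norm_num, ← pow_mul, ← pow_add]
    congr 1
    have := mem_range.mp hk
    omega
  rw [h4, mul_pow]
  field_simp

theorem gegQ_eq_eval (m : ℕ) :
    gegQ α m = fun x => (gegQPoly α m).eval x := by
  ext x
  simp [gegQ, gegQPoly, gegMonic_eq_eval hα]

theorem gegOperator_gegMonicPoly (n : ℕ) :
    gegOperator α (gegMonicPoly α n) = (-(n * (n + 2 * α))) • gegMonicPoly α n := by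
  rw [neg_smul, eq_neg_iff_add_eq_zero, gegMonicPoly, map_sum, smul_sum, ← sum_add_distrib]
  set c := gegMonicCoeff α n
  set ev := (n : ℝ) * (n + 2 * α)
  have hterm : ∀ k, gegOperator α (C (c k) * X ^ (n - 2 * k)) + ev • (C (c k) * X ^ (n - 2 * k)) =
      C (c k * ((n - 2 * k : ℕ) * ((n - 2 * k : ℕ) - 1))) * X ^ (n - 2 * k - 2) +
        C (c k * (ev - (n - 2 * k : ℕ) * ((n - 2 * k : ℕ) + 2 * α))) * X ^ (n - 2 * k) := by
    intro k
    rw [gegOperator_C_mul_X_pow, smul_eq_C_mul]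
    simp only [map_mul, map_sub]
    ring
  simp only [hterm]
  -- the two contributions to each degree `n - 2k - 2` cancel
  apply sum_range_succ_add_eq_zero
  · simp [ev]
  · have : n - 2 * (n / 2) = 0 ∨ n - 2 * (n / 2) = 1 := by omega
    rcases this with h | h <;> simp [h]
  · intro k hk
    obtain ⟨j, hj⟩ : ∃ j, n = 2 * k + 2 + j := ⟨n - (2 * k + 2), by omega⟩
    rw [show n - 2 * k - 2 = j by omega, show n - 2 * (k + 1) = j by omega,
      show n - 2 * k = j + 2 by omega, ← add_mul, ← C_add]
    convert zero_mul (X ^ j)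
    rw [C_eq_zero]
    simp only [ev, hj]
    push_cast
    linear_combination gegMonicCoeff_succ_mul hα hj

theorem derivative_gegQPoly (m : ℕ) :
    derivative (gegQPoly α m) = C (m : ℝ) * gegMonicPoly α (m - 1) := by
  match m with
  | 0 => simp [gegQPoly, gegMonicPoly]
  | 1 => simp [gegQPoly, gegMonicPoly, bcoef, gegMonicCoeff_zero hα]
  | M + 2 =>
    rw [gegQPoly, derivative_add, derivative_C_mul,
      derivative_gegMonicPoly α (N := (M + 1) / 2 + 1) (by omega),
      derivative_gegMonicPoly α (N := (M + 1) / 2) (by omega), gegMonicPoly,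
      show M + 2 - 1 = M + 1 by rfl, show M + 2 - 2 = M by rfl, sum_range_succ',
      sum_range_succ', mul_add, mul_sum, mul_sum, add_right_comm, ← sum_add_distrib]
    congr 1
    · refine sum_congr rfl fun k hk => ?_
      have hk := mem_range.mp hk
      obtain ⟨j, hj⟩ : ∃ j, M = 2 * k + 1 + j := ⟨M - (2 * k + 1), by omega⟩
      rw [show M + 2 - 2 * (k + 1) = j + 1 by omega, show M - 2 * k = j + 1 by omega,
        show M + 1 - 2 * (k + 1) = j by omega, add_tsub_cancel_right, ← mul_assoc, ← C_mul,
        ← add_mul, ← C_add, ← mul_assoc (C _ : ℝ[X]), ← C_mul]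
      congr 2
      have := gegMonicCoeff_derivative hα hj
      push_cast at this ⊢
      linear_combination this
    · simp [gegMonicCoeff_zero hα]

end GammaNeZero

/-- `gegenbauer` divides by `Γ α`, so for `α ∈ {0, -1, -2, …}` it is a junk zero. -/
theorem gegMonic_of_Gamma_eq_zero {α : ℝ} (hα : Real.Gamma α = 0) (n : ℕ) : gegMonic α n = 0 := by
  ext x
  simp [gegMonic, hα]

theorem gegQ_eq_add_smul (α : ℝ) (m : ℕ) :
    gegQ α m = gegMonic α m + ((m : ℝ) * bcoef (m - 1) α) • gegMonic α (m - 2) :=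
  rfl

theorem contDiff_gegMonic (α : ℝ) (n : ℕ) : ContDiff ℝ 1 (gegMonic α n) := by
  unfold gegMonic gegenbauer
  fun_prop

theorem contDiff_gegQ (α : ℝ) (m : ℕ) : ContDiff ℝ 1 (gegQ α m) :=
  (contDiff_gegMonic α m).add (contDiff_const.mul (contDiff_gegMonic α (m - 2)))

theorem deriv_gegQ (α : ℝ) (m : ℕ) : deriv (gegQ α m) = (m : ℝ) • gegMonic α (m - 1) := by
  rcases eq_or_ne (Real.Gamma α) 0 with hα | hα
  · simp [gegQ_eq_add_smul, gegMonic_of_Gamma_eq_zero hα]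
  · ext x
    rw [gegQ_eq_eval hα, Polynomial.deriv, derivative_gegQPoly hα, gegMonic_eq_eval hα]
    simp

theorem intervalIntegrable_one_sub_sq_rpow {c : ℝ} (hc : -1 < c) :
    IntervalIntegrable (fun x : ℝ => (1 - x ^ 2) ^ c) volume (-1) 1 := by
  -- on `[0, 1]` this is `(1 - x)^c` times a continuous factor; `[-1, 0]` follows by evenness
  have right : IntervalIntegrable (fun x : ℝ => (1 - x ^ 2) ^ c) volume 0 1 := by
    have h : IntervalIntegrable (fun x : ℝ => (1 - x) ^ c) volume 0 1 := by
      simpa using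
        ((intervalIntegral.intervalIntegrable_rpow' (a := 0) (b := 1) hc).comp_sub_left 1).symm
    refine (h.mul_continuousOn (g := fun x => (1 + x) ^ c) ?_).congr ?_
    · refine ContinuousOn.rpow_const (by fun_prop) fun x hx => .inl ?_
      rw [Set.uIcc_of_le zero_le_one] at hx
      linarith [hx.1]
    · intro x hx
      rw [Set.uIoc_of_le zero_le_one] at hx
      simp only
      rw [← Real.mul_rpow (by linarith [hx.2]) (by linarith [hx.1])]
      ring_nf
  have left : IntervalIntegrable (fun x : ℝ => (1 - x ^ 2) ^ c) volume (-1) 0 := by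
    simpa using (IntervalIntegrable.iff_comp_neg (f := fun x : ℝ => (1 - x ^ 2) ^ c)).mp right.symm
  exact left.trans right

noncomputable def gegInner (γ : ℝ) (f g : ℝ → ℝ) : ℝ :=
  ∫ x in Ioc (-1) 1, f x * g x * (1 - x ^ 2) ^ (γ - 1 / 2)

section gegInner

variable {γ : ℝ}

theorem integrableOn_gegInner (hγ : -(1 / 2) < γ) {f g : ℝ → ℝ} (hf : Continuous f)
    (hg : Continuous g) :
    IntegrableOn (fun x => f x * g x * (1 - x ^ 2) ^ (γ - 1 / 2)) (Ioc (-1) 1) := by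
  rw [← intervalIntegrable_iff_integrableOn_Ioc_of_le (by norm_num)]
  exact (intervalIntegrable_one_sub_sq_rpow (by linarith)).continuousOn_mul
    (hf.mul hg).continuousOn

theorem gegInner_comm (f g : ℝ → ℝ) : gegInner γ f g = gegInner γ g f := by
  simp only [gegInner, mul_comm (f _)]

theorem gegInner_smul_left (c : ℝ) (f g : ℝ → ℝ) : gegInner γ (c • f) g = c * gegInner γ f g := by
  simp only [gegInner, Pi.smul_apply, smul_eq_mul, mul_assoc, integral_const_mul]

theorem gegInner_smul_right (c : ℝ) (f g : ℝ → ℝ) : gegInner γ f (c • g) = c * gegInner γ f g := by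
  rw [gegInner_comm, gegInner_smul_left, gegInner_comm]

theorem gegInner_add_left (hγ : -(1 / 2) < γ) {f₁ f₂ g : ℝ → ℝ} (hf₁ : Continuous f₁)
    (hf₂ : Continuous f₂) (hg : Continuous g) :
    gegInner γ (f₁ + f₂) g = gegInner γ f₁ g + gegInner γ f₂ g := by
  simp only [gegInner, Pi.add_apply, add_mul]
  exact integral_add (integrableOn_gegInner hγ hf₁ hg) (integrableOn_gegInner hγ hf₂ hg)

theorem gegInner_add_right (hγ : -(1 / 2) < γ) {f g₁ g₂ : ℝ → ℝ} (hf : Continuous f)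
    (hg₁ : Continuous g₁) (hg₂ : Continuous g₂) :
    gegInner γ f (g₁ + g₂) = gegInner γ f g₁ + gegInner γ f g₂ := by
  rw [gegInner_comm, gegInner_add_left hγ hg₁ hg₂ hf, gegInner_comm, gegInner_comm g₂]

theorem gegInner_gegOperator (hγ : -(1 / 2) < γ) (p q : ℝ[X]) :
    gegInner γ (gegOperator γ p).eval q.eval =
      -gegInner (γ + 1) p.derivative.eval q.derivative.eval := by
  set F : ℝ → ℝ := fun x => p.derivative.eval x * q.eval x * (1 - x ^ 2) ^ (γ + 1 - 1 / 2)
  have hF : ∀ x ∈ Ioo (-1 : ℝ) 1, HasDerivAt F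
      ((gegOperator γ p).eval x * q.eval x * (1 - x ^ 2) ^ (γ - 1 / 2) +
        p.derivative.eval x * q.derivative.eval x * (1 - x ^ 2) ^ (γ + 1 - 1 / 2)) x := by
    intro x ⟨hx₁, hx₂⟩
    have hpos : 0 < 1 - x ^ 2 := by nlinarith
    have hw := ((hasDerivAt_pow 2 x).const_sub 1).rpow_const (p := γ + 1 - 1 / 2) (.inl hpos.ne')
    refine (((p.derivative.hasDerivAt x).mul (q.hasDerivAt x)).mul hw).congr_deriv ?_
    rw [eval_gegOperator, show γ + 1 - 1 / 2 = γ - 1 / 2 + 1 by ring, Real.rpow_add_one hpos.ne',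
      show γ - 1 / 2 + 1 - 1 = γ - 1 / 2 by ring]
    simp only [Pi.mul_apply]
    push_cast
    ring
  have hF_boundary : F 1 = 0 ∧ F (-1) = 0 := by
    constructor <;> simp [F, Real.zero_rpow (show γ + 1 - 2⁻¹ ≠ 0 by linarith)]
  have h₁ := integrableOn_gegInner hγ (gegOperator γ p).continuous q.continuous
  have h₂ := integrableOn_gegInner (γ := γ + 1) (by linarith) p.derivative.continuous
    q.derivative.continuous
  have hF_cont : Continuous F := (p.derivative.continuous.mul q.continuous).mul
    ((continuous_const.sub (continuous_pow 2)).rpow_const fun _ => .inr (by linarith))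
  have hFTC := intervalIntegral.integral_eq_sub_of_hasDeriv_right_of_le (f := F) (by norm_num)
    hF_cont.continuousOn (fun x hx => (hF x hx).hasDerivWithinAt) ?_
  · rw [hF_boundary.1, hF_boundary.2, sub_zero, intervalIntegral.integral_of_le (by norm_num),
      integral_add h₁ h₂] at hFTC
    rw [gegInner, gegInner]
    linarith
  · exact (intervalIntegrable_iff_integrableOn_Ioc_of_le (by norm_num)).mpr (h₁.add h₂)

theorem gegInner_eq_zero_of_eigen (hγ : -(1 / 2) < γ) {p q : ℝ[X]} {μ ν : ℝ}
    (hp : gegOperator γ p = μ • p) (hq : gegOperator γ q = ν • q) (hμν : μ ≠ ν) :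
    gegInner γ p.eval q.eval = 0 := by
  have eigen : ∀ (r s : ℝ[X]) (c : ℝ), gegOperator γ r = c • r →
      c * gegInner γ r.eval s.eval = -gegInner (γ + 1) r.derivative.eval s.derivative.eval := by
    intro r s c hr
    rw [← gegInner_gegOperator hγ, hr, ← gegInner_smul_left]
    congr 1
    ext x
    simp
  have h₁ := eigen p q μ hp
  have h₂ := eigen q p ν hq
  rw [gegInner_comm q.eval, gegInner_comm q.derivative.eval, ← h₁] at h₂
  have h : (μ - ν) * gegInner γ p.eval q.eval = 0 := by rw [sub_mul, h₂, sub_self]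
  exact (mul_eq_zero.mp h).resolve_left (sub_ne_zero.mpr hμν)

end gegInner

section Orthogonality

variable {γ : ℝ} (hγ : -(1 / 2) < γ)
include hγ

theorem gegInner_gegMonic {a b : ℕ} (hab : a ≠ b) :
    gegInner γ (gegMonic γ a) (gegMonic γ b) = 0 := by
  rcases eq_or_ne (Real.Gamma γ) 0 with hΓ | hΓ
  · simp [gegMonic_of_Gamma_eq_zero hΓ, gegInner]
  rw [gegMonic_eq_eval hΓ, gegMonic_eq_eval hΓ]
  refine gegInner_eq_zero_of_eigen hγ (gegOperator_gegMonicPoly hΓ a)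
    (gegOperator_gegMonicPoly hΓ b) fun h => ?_
  have hsum : (1 : ℝ) ≤ a + b := by exact_mod_cast (show 1 ≤ a + b by omega)
  have hfac : ((a : ℝ) - b) * (a + b + 2 * γ) = 0 := by linear_combination -h
  rcases mul_eq_zero.mp hfac with h' | h'
  · exact hab (by exact_mod_cast sub_eq_zero.mp h')
  · linarith

theorem gegInner_deriv_gegQ {a b : ℕ} (h : a ≠ b ∨ a = 0) :
    gegInner γ (deriv (gegQ γ a)) (deriv (gegQ γ b)) = 0 := by
  rw [deriv_gegQ, deriv_gegQ, gegInner_smul_left, gegInner_smul_right]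
  rcases Nat.eq_zero_or_pos a with rfl | ha
  · simp
  rcases Nat.eq_zero_or_pos b with rfl | hb
  · simp
  rw [gegInner_gegMonic hγ (by omega), mul_zero, mul_zero]

theorem gegInner_gegQ {a b : ℕ} (h : Odd ((a : ℤ) - b) ∨ 3 ≤ |(a : ℤ) - b|) :
    gegInner γ (gegQ γ a) (gegQ γ b) = 0 := by
  obtain ⟨h₀, h₁, h₂, h₃⟩ : a ≠ b ∧ (2 ≤ b → a ≠ b - 2) ∧ (2 ≤ a → a - 2 ≠ b) ∧
      (2 ≤ a → 2 ≤ b → a - 2 ≠ b - 2) := by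
    rcases h with ⟨r, hr⟩ | h
    · omega
    · rcases le_abs.mp h with h | h <;> omega
  have hcoeff : ∀ m : ℕ, m < 2 → (m : ℝ) * bcoef (m - 1) γ = 0 := by
    intro m hm
    interval_cases m <;> simp [bcoef]
  have hp := fun n => (contDiff_gegMonic γ n).continuous
  rw [gegQ_eq_add_smul γ a, gegInner_add_left hγ (hp a) ((hp _).const_smul _)
      (contDiff_gegQ γ b).continuous, gegInner_smul_left, gegQ_eq_add_smul γ b,
    gegInner_add_right hγ (hp a) (hp b) ((hp _).const_smul _),
    gegInner_add_right hγ (hp _) (hp b) ((hp _).const_smul _), gegInner_smul_right,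
    gegInner_smul_right, gegInner_gegMonic hγ h₀, zero_add]
  rcases lt_or_ge a 2 with ha | ha <;> rcases lt_or_ge b 2 with hb | hb
  · simp [hcoeff a ha, hcoeff b hb]
  · simp [hcoeff a ha, gegInner_gegMonic hγ (h₁ hb)]
  · simp [hcoeff b hb, gegInner_gegMonic hγ (h₂ ha)]
  · simp [gegInner_gegMonic hγ (h₁ hb), gegInner_gegMonic hγ (h₂ ha),
      gegInner_gegMonic hγ (h₃ ha hb)]

end Orthogonality

theorem gegGrad_mul_mul {α β : ℝ} (hα : -(1 / 2) < α) (hβ : -(1 / 2) < β)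
    {f₁ f₂ g₁ g₂ : ℝ → ℝ} (hf₁ : ContDiff ℝ 1 f₁) (hf₂ : ContDiff ℝ 1 f₂) (hg₁ : ContDiff ℝ 1 g₁)
    (hg₂ : ContDiff ℝ 1 g₂) :
    gegGrad α β (fun x y => f₁ x * f₂ y) (fun x y => g₁ x * g₂ y) =
      Real.Gamma (α + 1) * Real.Gamma (β + 1) /
          (Real.Gamma (α + 1 / 2) * Real.Gamma (β + 1 / 2) * Real.pi) *
        (gegInner α (deriv f₁) (deriv g₁) * gegInner β f₂ g₂ +
          gegInner α f₁ g₁ * gegInner β (deriv f₂) (deriv g₂)) := by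
  set F₁ := fun x => deriv f₁ x * deriv g₁ x * (1 - x ^ 2) ^ (α - 1 / 2)
  set F₂ := fun y => f₂ y * g₂ y * (1 - y ^ 2) ^ (β - 1 / 2)
  set G₁ := fun x => f₁ x * g₁ x * (1 - x ^ 2) ^ (α - 1 / 2)
  set G₂ := fun y => deriv f₂ y * deriv g₂ y * (1 - y ^ 2) ^ (β - 1 / 2)
  have hF₁ : IntegrableOn F₁ (Ioc (-1) 1) :=
    integrableOn_gegInner hα (hf₁.continuous_deriv le_rfl) (hg₁.continuous_deriv le_rfl)
  have hF₂ : IntegrableOn F₂ (Ioc (-1) 1) := integrableOn_gegInner hβ hf₂.continuous hg₂.continuous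
  have hG₁ : IntegrableOn G₁ (Ioc (-1) 1) := integrableOn_gegInner hα hf₁.continuous hg₁.continuous
  have hG₂ : IntegrableOn G₂ (Ioc (-1) 1) :=
    integrableOn_gegInner hβ (hf₂.continuous_deriv le_rfl) (hg₂.continuous_deriv le_rfl)
  rw [gegGrad]
  congr 1
  calc _ = ∫ p in Ioc (-1 : ℝ) 1 ×ˢ Ioc (-1 : ℝ) 1, (F₁ p.1 * F₂ p.2 + G₁ p.1 * G₂ p.2) := by
        congr 1
        ext p
        simp only [F₁, F₂, G₁, G₂, deriv_mul_const_field, deriv_const_mul_field, Real.rpow_eq_pow]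
        ring
    _ = _ := by
      rw [Measure.volume_eq_prod, integral_add, setIntegral_prod_mul, setIntegral_prod_mul]
      · rfl
      · rw [← Measure.prod_restrict]; exact hF₁.mul_prod hF₂
      · rw [← Measure.prod_restrict]; exact hG₁.mul_prod hG₂

theorem gegGrad_gegQ2_eq_zero {α β : ℝ} (hα : -(1 / 2) < α) (hβ : -(1 / 2) < β) {n k m l : ℕ}
    (hx : (n - k ≠ m - l ∨ n - k = 0) ∨ Odd ((k : ℤ) - l) ∨ 3 ≤ |(k : ℤ) - l|)
    (hy : (k ≠ l ∨ k = 0) ∨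
      Odd (((n - k : ℕ) : ℤ) - (m - l : ℕ)) ∨ 3 ≤ |((n - k : ℕ) : ℤ) - (m - l : ℕ)|) :
    gegGrad α β (gegQ2 α β n k) (gegQ2 α β m l) = 0 := by
  have h₁ : gegInner α (deriv (gegQ α (n - k))) (deriv (gegQ α (m - l))) *
      gegInner β (gegQ β k) (gegQ β l) = 0 := by
    rcases hx with hx | hx
    · rw [gegInner_deriv_gegQ hα hx, zero_mul]
    · rw [gegInner_gegQ hβ hx, mul_zero]
  have h₂ : gegInner α (gegQ α (n - k)) (gegQ α (m - l)) *
      gegInner β (deriv (gegQ β k)) (deriv (gegQ β l)) = 0 := by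
    rcases hy with hy | hy
    · rw [gegInner_deriv_gegQ hβ hy, mul_zero]
    · rw [gegInner_gegQ hα hy, zero_mul]
  unfold gegQ2
  rw [gegGrad_mul_mul hα hβ (contDiff_gegQ α _) (contDiff_gegQ β _) (contDiff_gegQ α _)
    (contDiff_gegQ β _), h₁, h₂, add_zero, mul_zero]

/-- For the product Gegenbauer weight, `⟨Q_i^n, Q_l^m⟩_∇ = 0` whenever `n - m` is odd or
`|n - m| ≥ 3`; in particular `⟨Q_0^n, Q_l^m⟩_∇ = 0` and `⟨Q_n^n, Q_l^m⟩_∇ = 0` for `m < n`. -/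
theorem gegGrad_far_orthogonal (α β : ℝ) (hα : -(1 / 2 : ℝ) < α) (hβ : -(1 / 2 : ℝ) < β) :
    (∀ n m i l : ℕ, i ≤ n → l ≤ m → (Odd ((n : ℤ) - m) ∨ 3 ≤ |(n : ℤ) - m|) →
      gegGrad α β (gegQ2 α β n i) (gegQ2 α β m l) = 0) ∧
    (∀ n m l : ℕ, l ≤ m → m < n →
      gegGrad α β (gegQ2 α β n 0) (gegQ2 α β m l) = 0 ∧
      gegGrad α β (gegQ2 α β n n) (gegQ2 α β m l) = 0) := by
  have vanish := @gegGrad_gegQ2_eq_zero α β hα hβ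
  refine ⟨fun n m i l hi hl hfar => vanish ?_ ?_, fun n m l hl hmn => ⟨vanish ?_ ?_, vanish ?_ ?_⟩⟩
  · by_cases h : n - i = m - l
    · exact .inr (by rwa [show (i : ℤ) - l = n - m by omega])
    · exact .inl (.inl h)
  · by_cases h : i = l
    · exact .inr (by rwa [show ((n - i : ℕ) : ℤ) - (m - l : ℕ) = n - m by omega])
    · exact .inl (.inl h)
  · exact .inl (.inl (by omega))
  · exact .inl (.inr rfl)
  · exact .inl (.inr (Nat.sub_self n))
  · exact .inl (.inl (by omega))
end
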